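/- arXiv:2310.17307 — 7 statements merged into one kernel-verified Lean document; each statement's English description precedes it below -/
import Mathlib

section
/- For the Farlie-Gumbel-Morgenstern copula C_θ(u,v) = uv + θ·u·v·(1−u)·(1−v) with θ ∈ [−1,1], Chatterjee's xi coefficient equals ξ(C_θ) = 6·∫₀¹∫₀¹ (∂₁C_θ(u,v))² du dv − 2 = θ²/15. -/
/-!
The partial derivative `v + θ v (1 - v) (1 - 2u)` is affine in `u`, and `1 - 2u` has mean `0`
and second moment `1/3` on `[0, 1]`, so the inner integral is `v² + θ² (v (1 - v))² / 3`.
The moments `∫ v² = 1/3` and `∫ (v (1 - v))² = B(3, 3) = 1/30` then give `1/3 + θ²/90`.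
-/

open intervalIntegral

theorem hasDerivAt_fgm_fst (θ v u : ℝ) :
    HasDerivAt (fun x : ℝ => x * v + θ * x * v * (1 - x) * (1 - v))
      (v + θ * v * (1 - v) * (1 - 2 * u)) u := by
  have := ((hasDerivAt_id' u).mul_const v).add
    (((((hasDerivAt_id' u).const_mul θ).mul_const v).mul ((hasDerivAt_id' u).const_sub 1)).mul_const
      (1 - v))
  exact this.congr_deriv (by ring)

theorem integral_sq_add_mul_one_sub_two_mul (c d : ℝ) :
    ∫ u in (0:ℝ)..1, (c + d * (1 - 2 * u)) ^ 2 = c ^ 2 + d ^ 2 / 3 := by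
  have expand : (fun u : ℝ => (c + d * (1 - 2 * u)) ^ 2) =
      fun u => (c + d) ^ 2 - 4 * d * (c + d) * u + 4 * d ^ 2 * u ^ 2 := by
    funext u; ring
  rw [expand, integral_add, integral_sub, integral_const_mul, integral_const_mul, integral_const,
    integral_id, integral_pow]
  · norm_num; ring
  all_goals apply Continuous.intervalIntegrable; fun_prop

theorem integral_sq_mul_one_sub_sq : ∫ v in (0:ℝ)..1, (v * (1 - v)) ^ 2 = 1 / 30 := by
  have expand : (fun v : ℝ => (v * (1 - v)) ^ 2) = fun v => v ^ 2 - 2 * v ^ 3 + v ^ 4 := by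
    funext v; ring
  rw [expand, integral_add, integral_sub, integral_const_mul, integral_pow, integral_pow,
    integral_pow]
  · norm_num
  all_goals apply Continuous.intervalIntegrable; fun_prop

theorem fgm_chatterjee_xi_general (θ : ℝ) :
    6 * (∫ v in (0:ℝ)..1, ∫ u in (0:ℝ)..1,
        (deriv (fun x : ℝ => x * v + θ * x * v * (1 - x) * (1 - v)) u) ^ 2) - 2
      = θ ^ 2 / 15 := by
  have inner (v : ℝ) : ∫ u in (0:ℝ)..1,
      (deriv (fun x : ℝ => x * v + θ * x * v * (1 - x) * (1 - v)) u) ^ 2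
        = v ^ 2 + θ ^ 2 / 3 * (v * (1 - v)) ^ 2 := by
    simp_rw [fun u => (hasDerivAt_fgm_fst θ v u).deriv, integral_sq_add_mul_one_sub_two_mul]
    ring
  have outer : ∫ v in (0:ℝ)..1, (v ^ 2 + θ ^ 2 / 3 * (v * (1 - v)) ^ 2) = 1 / 3 + θ ^ 2 / 90 := by
    rw [integral_add, integral_const_mul, integral_pow, integral_sq_mul_one_sub_sq]
    · norm_num; ring
    all_goals apply Continuous.intervalIntegrable; fun_prop
  simp_rw [inner, outer]
  ring

theorem fgm_chatterjee_xi (θ : ℝ) (hθ : θ ∈ Set.Icc (-1:ℝ) 1) :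
    6 * (∫ v in (0:ℝ)..1, ∫ u in (0:ℝ)..1,
        (deriv (fun x : ℝ => x * v + θ * x * v * (1 - x) * (1 - v)) u) ^ 2) - 2
      = θ ^ 2 / 15 :=
  fgm_chatterjee_xi_general θ
end

section
/- For the Nelsen7 copula C_θ(u,v) = max(θuv + (1−θ)(u+v−1), 0) with θ ∈ (0,1), Chatterjee's xi coefficient equals ξ(C_θ) = 6·∫₀¹∫₀¹ (∂₁C_θ(u,v))² du dv − 2 = 1 − θ. -/
/-!
For fixed `v`, the expression `θuv + (1 - θ)(u + v - 1)` equals `a u - (1 - θ)(1 - v)` with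
`a = θv + 1 - θ > 0`, so `∂₁C_θ(·, v)` is the constant `a` on `(c, 1]` and vanishes on `[0, c]`,
where `c = (1 - θ)(1 - v) / a ∈ [0, 1]`. Hence the inner integral is `a² (1 - c) = v a`, and
`∫₀¹ v (θv + 1 - θ) dv = θ/3 + (1 - θ)/2`, which gives `ξ = 6 (θ/3 + (1 - θ)/2) - 2 = 1 - θ`.
-/

open MeasureTheory Set

lemma intervalIntegral_ite_lt_const {a b c k : ℝ} (hac : a ≤ c) (hcb : c ≤ b) :
    ∫ u in a..b, (if c < u then k else 0) = (b - c) * k := by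
  have hind : (fun u : ℝ => if c < u then k else 0) = (Ioi c).indicator (fun _ => k) := by
    ext u
    simp only [indicator, mem_Ioi]
  have hset : Ioi c ∩ Ioc a b = Ioc c b := by
    ext u
    simp only [mem_inter_iff, mem_Ioi, mem_Ioc]
    exact ⟨fun ⟨h1, _, h3⟩ => ⟨h1, h3⟩, fun ⟨h1, h2⟩ => ⟨h1, hac.trans_lt h1, h2⟩⟩
  rw [hind, intervalIntegral.integral_of_le (hac.trans hcb), integral_indicator measurableSet_Ioi,
    Measure.restrict_restrict measurableSet_Ioi, hset, setIntegral_const,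
    Real.volume_real_Ioc_of_le hcb, smul_eq_mul]

section Nelsen7

variable {θ v : ℝ}

lemma nelsen7_slope_pos (hθ : θ < 1) (hv : v ∈ Icc (0 : ℝ) 1) : 0 < θ * v + 1 - θ := by
  rcases le_or_gt 0 θ with hθ0 | hθ0
  · nlinarith [mul_nonneg hθ0 hv.1]
  · nlinarith [mul_nonneg (neg_nonneg.2 hθ0.le) (sub_nonneg.2 hv.2)]

lemma nelsen7_pos_iff (hθ : θ < 1) (hv : v ∈ Icc (0 : ℝ) 1) (u : ℝ) :
    0 < θ * u * v + (1 - θ) * (u + v - 1) ↔ (1 - θ) * (1 - v) / (θ * v + 1 - θ) < u := by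
  rw [div_lt_iff₀ (nelsen7_slope_pos hθ hv)]
  constructor <;> intro h <;> linarith

lemma nelsen7_integral_sq_partialDeriv (hθ : θ < 1) (hv : v ∈ Icc (0 : ℝ) 1) :
    ∫ u in (0 : ℝ)..1,
        ((θ * v + 1 - θ) * (if 0 < θ * u * v + (1 - θ) * (u + v - 1) then (1 : ℝ) else 0)) ^ 2
      = v * (θ * v + 1 - θ) := by
  have ha := nelsen7_slope_pos hθ hv
  have hcut_nonneg : 0 ≤ (1 - θ) * (1 - v) / (θ * v + 1 - θ) :=
    div_nonneg (mul_nonneg (by linarith) (by linarith [hv.2])) ha.le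
  have hcut_le_one : (1 - θ) * (1 - v) / (θ * v + 1 - θ) ≤ 1 := by
    rw [div_le_one ha]
    linarith [hv.1]
  simp_rw [nelsen7_pos_iff hθ hv, mul_ite, mul_one, mul_zero, ite_pow, zero_pow two_ne_zero]
  rw [intervalIntegral_ite_lt_const hcut_nonneg hcut_le_one]
  field_simp
  ring

end Nelsen7

theorem nelsen7_chatterjee_xi (θ : ℝ) (hθ : θ ∈ Set.Ioo (0:ℝ) 1) :
    6 * (∫ v in (0:ℝ)..1, ∫ u in (0:ℝ)..1,
        ((θ * v + 1 - θ) *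
          (if 0 < θ * u * v + (1 - θ) * (u + v - 1) then (1:ℝ) else 0)) ^ 2) - 2
      = 1 - θ := by
  have hinner : (∫ v in (0:ℝ)..1, ∫ u in (0:ℝ)..1,
        ((θ * v + 1 - θ) *
          (if 0 < θ * u * v + (1 - θ) * (u + v - 1) then (1:ℝ) else 0)) ^ 2)
      = ∫ v in (0:ℝ)..1, (θ * v ^ 2 + (1 - θ) * v) := by
    refine intervalIntegral.integral_congr fun v hv => ?_
    rw [uIcc_of_le zero_le_one] at hv
    rw [nelsen7_integral_sq_partialDeriv hθ.2 hv]
    ring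
  have houter : ∫ v in (0:ℝ)..1, (θ * v ^ 2 + (1 - θ) * v) = θ / 3 + (1 - θ) / 2 := by
    rw [intervalIntegral.integral_add (by apply Continuous.intervalIntegrable; fun_prop)
        (by apply Continuous.intervalIntegrable; fun_prop),
      intervalIntegral.integral_const_mul, intervalIntegral.integral_const_mul, integral_pow,
      integral_id]
    ring
  rw [hinner, houter]
  ring
end

section
/- For the Cuadras-Augé copula C_δ(u,v) = min(u,v)^δ · (uv)^{1−δ} with δ ∈ [0,1], Chatterjee's xi coefficient equals ξ(C_δ) = 6·∫₀¹∫₀¹ (∂₁C_δ(u,v))² du dv − 2 = δ²/(2−δ). -/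
/-!
For fixed `v ∈ (0, 1)` the section `u ↦ C_δ(u, v)` equals `u v^(1-δ)` on `[0, v]` and
`v u^(1-δ)` on `[v, 1]`, so the inner integral is `v^(3-2δ) + (1-δ)² v² ∫_v^1 u^(-2δ) du`.
For `r > -3` one has `∫_0^1 v² ∫_v^1 u^r du dv = 1 / (3 (r + 4))`, the logarithmic case `r = -1`
included, and therefore `ξ(C_δ) = 6 / (4 - 2δ) + 2 (1-δ)² / (4 - 2δ) - 2 = δ² / (2 - δ)`.
-/

open Real Set intervalIntegral

noncomputable def cuadrasAuge (δ u v : ℝ) : ℝ := min u v ^ δ * (u * v) ^ (1 - δ)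

section CuadrasAuge

variable {δ u v : ℝ}

theorem cuadrasAuge_of_le (hu : 0 < u) (hv : 0 ≤ v) (huv : u ≤ v) :
    cuadrasAuge δ u v = u * v ^ (1 - δ) := by
  rw [cuadrasAuge, min_eq_left huv, mul_rpow hu.le hv, ← mul_assoc, ← rpow_add hu,
    add_sub_cancel, rpow_one]

theorem cuadrasAuge_of_ge (hu : 0 ≤ u) (hv : 0 < v) (hvu : v ≤ u) :
    cuadrasAuge δ u v = v * u ^ (1 - δ) := by
  rw [cuadrasAuge, min_eq_right hvu, mul_rpow hu hv.le, mul_left_comm, ← rpow_add hv,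
    add_sub_cancel, rpow_one, mul_comm]

theorem deriv_cuadrasAuge_of_lt (hu : 0 < u) (huv : u < v) :
    deriv (cuadrasAuge δ · v) u = v ^ (1 - δ) := by
  have hC : (cuadrasAuge δ · v) =ᶠ[nhds u] fun x => x * v ^ (1 - δ) := by
    filter_upwards [Ioo_mem_nhds hu huv] with x hx
    exact cuadrasAuge_of_le hx.1 (hu.trans huv).le hx.2.le
  rw [hC.deriv_eq, deriv_mul_const_field, deriv_id'', one_mul]

theorem deriv_cuadrasAuge_of_gt (hv : 0 < v) (hvu : v < u) :
    deriv (cuadrasAuge δ · v) u = (1 - δ) * v * u ^ (-δ) := by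
  have hC : (cuadrasAuge δ · v) =ᶠ[nhds u] fun x => v * x ^ (1 - δ) := by
    filter_upwards [Ioi_mem_nhds hvu] with x hx
    exact cuadrasAuge_of_ge (hv.trans hx).le hv hx.le
  rw [hC.deriv_eq, ((hasDerivAt_rpow_const (Or.inl (hv.trans hvu).ne')).const_mul v).deriv,
    sub_sub_cancel_left]
  ring

theorem integral_sq_deriv_cuadrasAuge (hv : v ∈ Ioo 0 1) :
    ∫ u in 0..1, (deriv (cuadrasAuge δ · v) u) ^ 2
      = v ^ (3 - 2 * δ) + (1 - δ) ^ 2 * (v ^ 2 * ∫ u in v..1, u ^ (-(2 * δ))) := by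
  obtain ⟨hv0, hv1⟩ := hv
  have hleft : EqOn (fun u => (deriv (cuadrasAuge δ · v) u) ^ 2) (fun _ => (v ^ (1 - δ)) ^ 2)
      (Ioo 0 v) := fun u hu => by
    simp only [deriv_cuadrasAuge_of_lt hu.1 hu.2]
  have hright : EqOn (fun u => (deriv (cuadrasAuge δ · v) u) ^ 2)
      (fun u => (1 - δ) ^ 2 * v ^ 2 * u ^ (-(2 * δ))) (Ioo v 1) := fun u hu => by
    have hu0 : 0 < u := hv0.trans hu.1
    simp only [deriv_cuadrasAuge_of_gt hv0 hu.1, mul_pow, ← rpow_natCast, ← rpow_mul hu0.le]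
    push_cast
    ring_nf
  have hcont : ContinuousOn (fun u : ℝ => (1 - δ) ^ 2 * v ^ 2 * u ^ (-(2 * δ))) (uIcc v 1) :=
    continuousOn_const.mul <| continuousOn_id.rpow_const fun u hu =>
      Or.inl (hv0.trans_le (uIcc_of_le hv1.le ▸ hu).1).ne'
  rw [← integral_add_adjacent_intervals (b := v)
      ((intervalIntegrable_congr_uIoo (uIoo_of_le hv0.le ▸ hleft)).2 intervalIntegrable_const)
      ((intervalIntegrable_congr_uIoo (uIoo_of_le hv1.le ▸ hright)).2 hcont.intervalIntegrable),
    integral_congr_Ioo_of_le hv0.le hleft, integral_congr_Ioo_of_le hv1.le hright,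
    integral_const, integral_const_mul, smul_eq_mul, sub_zero, ← rpow_two, ← rpow_mul hv0.le,
    mul_comm v, ← rpow_add_one hv0.ne']
  ring_nf

end CuadrasAuge

section SqMulIntegralRpow

variable {r v : ℝ}

theorem sq_mul_integral_rpow_of_ne (hr : r ≠ -1) (hv : 0 < v) :
    v ^ 2 * ∫ u in v..1, u ^ r = (v ^ 2 - v ^ (r + 3)) / (r + 1) := by
  rw [integral_rpow (Or.inr ⟨hr, notMem_uIcc_of_lt hv one_pos⟩), one_rpow,
    show r + 3 = (r + 1) + 2 by ring, rpow_add hv (r + 1) 2, rpow_two]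
  ring

theorem sq_mul_integral_rpow_neg_one (hv : 0 < v) :
    v ^ 2 * ∫ u in v..1, u ^ (-1 : ℝ) = -(v ^ 2 * log v) := by
  simp_rw [rpow_neg_one]
  rw [integral_inv_of_pos hv one_pos, one_div, log_inv, mul_neg]

theorem integral_sq_mul_log : ∫ v in (0 : ℝ)..1, v ^ 2 * log v = -1 / 9 := by
  have hF : ∀ v ∈ Ioo (0 : ℝ) 1,
      HasDerivAt (fun v => v ^ 2 / 3 * (v * log v) - v ^ 3 / 9) (v ^ 2 * log v) v := by
    intro v hv
    refine ((((hasDerivAt_pow 2 v).div_const 3).mul ((hasDerivAt_id' v).mul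
      (hasDerivAt_log hv.1.ne'))).sub ((hasDerivAt_pow 3 v).div_const 9)).congr_deriv ?_
    have := hv.1.ne'
    simp only [Pi.mul_apply]
    field_simp
    ring
  have hcont : Continuous fun v : ℝ => v ^ 2 / 3 * (v * log v) - v ^ 3 / 9 := by fun_prop
  have hint : IntervalIntegrable (fun v : ℝ => v ^ 2 * log v) MeasureTheory.volume 0 1 := by
    simp_rw [sq, mul_assoc]
    exact (continuous_id.mul continuous_mul_log).intervalIntegrable 0 1
  rw [integral_eq_sub_of_hasDerivAt_of_le zero_le_one hcont.continuousOn hF hint]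
  norm_num

theorem intervalIntegrable_sq_mul_integral_rpow (hr : -3 < r) :
    IntervalIntegrable (fun v => v ^ 2 * ∫ u in v..1, u ^ r) MeasureTheory.volume 0 1 := by
  rcases eq_or_ne r (-1) with rfl | hr1
  · have h : EqOn (fun v => -(v ^ 2 * log v)) (fun v => v ^ 2 * ∫ u in v..1, u ^ (-1 : ℝ))
        (uIoo 0 1) := by
      rw [uIoo_of_le zero_le_one]
      exact fun v hv => (sq_mul_integral_rpow_neg_one hv.1).symm
    refine IntervalIntegrable.congr_uIoo ?_ h
    simp_rw [sq, mul_assoc]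
    exact ((continuous_id.mul continuous_mul_log).neg).intervalIntegrable 0 1
  · have h : EqOn (fun v => (v ^ 2 - v ^ (r + 3)) / (r + 1))
        (fun v => v ^ 2 * ∫ u in v..1, u ^ r) (uIoo 0 1) := by
      rw [uIoo_of_le zero_le_one]
      exact fun v hv => (sq_mul_integral_rpow_of_ne hr1 hv.1).symm
    exact ((((continuous_pow 2).intervalIntegrable 0 1).sub
      (intervalIntegrable_rpow' (by linarith))).div_const _).congr_uIoo h

theorem integral_sq_mul_integral_rpow (hr : -3 < r) :
    ∫ v in (0 : ℝ)..1, v ^ 2 * ∫ u in v..1, u ^ r = 1 / (3 * (r + 4)) := by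
  rcases eq_or_ne r (-1) with rfl | hr1
  · rw [integral_congr_Ioo_of_le zero_le_one fun v hv => sq_mul_integral_rpow_neg_one hv.1,
      intervalIntegral.integral_neg, integral_sq_mul_log]
    norm_num
  · rw [integral_congr_Ioo_of_le zero_le_one fun v hv => sq_mul_integral_rpow_of_ne hr1 hv.1,
      intervalIntegral.integral_div, integral_sub ((continuous_pow 2).intervalIntegrable 0 1)
        (intervalIntegrable_rpow' (by linarith)), integral_pow,
      integral_rpow (Or.inl (by linarith)), one_rpow, zero_rpow (by linarith)]
    have : r + 1 ≠ 0 := by contrapose! hr1; linarith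
    have : r + 4 ≠ 0 := by linarith
    rw [show r + 3 + 1 = r + 4 by ring]
    field_simp
    ring

end SqMulIntegralRpow

theorem cuadras_auge_chatterjee_xi (δ : ℝ) (hδ : δ ∈ Set.Icc (0:ℝ) 1) :
    6 * (∫ v in (0:ℝ)..1, ∫ u in (0:ℝ)..1,
        (deriv (fun x : ℝ => (min x v) ^ δ * (x * v) ^ (1 - δ)) u) ^ 2) - 2
      = δ ^ 2 / (2 - δ) := by
  obtain ⟨-, hδ1⟩ := hδ
  have hr : (-3 : ℝ) < -(2 * δ) := by linarith
  change 6 * (∫ v in (0:ℝ)..1, ∫ u in (0:ℝ)..1, (deriv (cuadrasAuge δ · v) u) ^ 2) - 2 = _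
  rw [integral_congr_Ioo_of_le zero_le_one fun v hv => integral_sq_deriv_cuadrasAuge hv,
    integral_add (intervalIntegrable_rpow' (by linarith))
      ((intervalIntegrable_sq_mul_integral_rpow hr).const_mul _),
    integral_const_mul, integral_sq_mul_integral_rpow hr, integral_rpow (Or.inl (by linarith)),
    one_rpow, zero_rpow (by linarith), show 3 - 2 * δ + 1 = 2 * (2 - δ) by ring,
    show -(2 * δ) + 4 = 2 * (2 - δ) by ring]
  have : 2 - δ ≠ 0 := by linarith
  field_simp
  ring
end

section
/- For the Marshall-Olkin copula C_{α1,α2}(u,v) = min(u^{1−α1}·v, u·v^{1−α2}) with parameters α1, α2 ∈ (0,1], Chatterjee's xi coefficient equals ξ(C_{α1,α2}) = 6·∫₀¹∫₀¹ (∂₁C_{α1,α2}(u,v))² du dv − 2 = 2·α1²·α2 / (3·α1 + α2 − 2·α1·α2). -/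
open Real

/-!
Swap the order of integration, which is legitimate since `0 ≤ ∂₁C ≤ 1`. For fixed `u`,
`∂₁C = (1 - α₁) u^(-α₁) v` exactly when `v < u^(α₁/α₂)`, so the inner integral in `v` splits there
into two integrals of powers of `v`, and the outer integral is again one of powers of `u`; both of
its exponents plus one equal `(3α₁ + α₂ - 2α₁α₂)/α₂`. In the original order the inner integral
contains `∫ u^(-2α₁) du`, which turns logarithmic at `α₁ = 1/2`.
-/

open MeasureTheory Set intervalIntegral

lemma integral_rpow_zero_one {r : ℝ} (hr : -1 < r) : ∫ x in (0:ℝ)..1, x ^ r = 1 / (r + 1) := by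
  rw [integral_rpow (Or.inl hr), one_rpow, zero_rpow (by linarith)]
  ring

lemma intervalIntegral.integral_ite_lt {f g : ℝ → ℝ} {a s b : ℝ} (has : a ≤ s) (hsb : s ≤ b)
    (hf : IntervalIntegrable f volume a s) (hg : IntervalIntegrable g volume s b) :
    ∫ x in a..b, (if x < s then f x else g x) = (∫ x in a..s, f x) + ∫ x in s..b, g x := by
  have hlt : EqOn f (fun x => if x < s then f x else g x) (Ioo a s) :=
    fun x hx => (if_pos hx.2).symm
  have hge : EqOn g (fun x => if x < s then f x else g x) (Icc s b) :=
    fun x hx => (if_neg (not_lt.2 hx.1)).symm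
  rw [← integral_add_adjacent_intervals (hf.congr_uIoo (uIoo_of_le has ▸ hlt))
      (hg.congr (uIoc_of_le hsb ▸ fun x hx => hge (Ioc_subset_Icc_self hx))),
    integral_congr_Ioo_of_le has hlt.symm, integral_congr (a := s) (uIcc_of_le hsb ▸ hge.symm)]

namespace MarshallOlkin

noncomputable def partialDeriv (α₁ α₂ u v : ℝ) : ℝ :=
  if u ^ (1 - α₁) * v < u * v ^ (1 - α₂) then (1 - α₁) * u ^ (-α₁) * v else v ^ (1 - α₂)

variable {α₁ α₂ u v : ℝ}

lemma rpow_mul_lt_mul_rpow_iff (hα₂ : 0 < α₂) (hu : 0 < u) (hv : 0 < v) :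
    u ^ (1 - α₁) * v < u * v ^ (1 - α₂) ↔ v < u ^ (α₁ / α₂) := by
  rw [rpow_sub hu, rpow_sub hv, rpow_one, rpow_one, div_mul_eq_mul_div, mul_div_assoc',
    div_lt_div_iff₀ (rpow_pos_of_pos hu _) (rpow_pos_of_pos hv _),
    mul_lt_mul_iff_right₀ (mul_pos hu hv), ← rpow_lt_rpow_iff hv.le (rpow_nonneg hu.le _) hα₂,
    ← rpow_mul hu.le, div_mul_cancel₀ _ hα₂.ne']

lemma partialDeriv_mem_Icc (hα₁ : α₁ ∈ Icc 0 1) (hα₂ : α₂ ≤ 1) (hu : 0 < u)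
    (hv : v ∈ Icc 0 1) : partialDeriv α₁ α₂ u v ∈ Icc 0 1 := by
  have hv_le : v ^ (1 - α₂) ≤ 1 := rpow_le_one hv.1 hv.2 (by linarith)
  unfold partialDeriv
  split_ifs with h
  · have hlt : u ^ (-α₁) * v < v ^ (1 - α₂) := by
      rw [sub_eq_add_neg, rpow_add hu, rpow_one, mul_assoc] at h
      exact lt_of_mul_lt_mul_left h hu.le
    have hnonneg : 0 ≤ u ^ (-α₁) * v := mul_nonneg (rpow_nonneg hu.le _) hv.1
    rw [mul_assoc]
    constructor <;> nlinarith [hα₁.1, hα₁.2]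
  · exact ⟨rpow_nonneg hv.1 _, hv_le⟩

lemma partialDeriv_sq (hα₂ : 0 < α₂) (hu : 0 < u) (hv : 0 < v) :
    partialDeriv α₁ α₂ u v ^ 2 =
      if v < u ^ (α₁ / α₂) then ((1 - α₁) * u ^ (-α₁)) ^ 2 * v ^ 2 else v ^ (2 - 2 * α₂) := by
  simp only [partialDeriv, rpow_mul_lt_mul_rpow_iff hα₂ hu hv]
  split_ifs
  · ring
  · rw [← rpow_mul_natCast hv.le]
    ring_nf

lemma integrableOn_partialDeriv_sq (hα₁ : α₁ ∈ Icc 0 1) (hα₂ : α₂ ≤ 1) :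
    IntegrableOn (Function.uncurry fun v u => partialDeriv α₁ α₂ u v ^ 2)
      (uIoc 0 1 ×ˢ uIoc 0 1) := by
  rw [uIoc_of_le zero_le_one]
  refine Measure.integrableOn_of_bounded (M := 1) ?_ ?_ ?_
  · rw [Measure.volume_eq_prod, Measure.prod_prod]
    simp
  · refine (Measurable.pow_const ?_ 2).aestronglyMeasurable
    exact Measurable.ite (measurableSet_lt (by fun_prop) (by fun_prop)) (by fun_prop) (by fun_prop)
  · refine ae_restrict_of_forall_mem (measurableSet_Ioc.prod measurableSet_Ioc) fun p hp => ?_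
    obtain ⟨h0, h1⟩ := partialDeriv_mem_Icc hα₁ hα₂ hp.2.1 (Ioc_subset_Icc_self hp.1)
    change ‖partialDeriv α₁ α₂ p.2 p.1 ^ 2‖ ≤ 1
    rw [norm_pow, Real.norm_of_nonneg h0]
    exact pow_le_one₀ h0 h1

lemma integral_partialDeriv_sq_dv (hα₁ : 0 ≤ α₁) (hα₂ : α₂ ∈ Ioc 0 1) (hu : u ∈ Ioc 0 1) :
    ∫ v in (0:ℝ)..1, partialDeriv α₁ α₂ u v ^ 2 =
      (1 - α₁) ^ 2 / 3 * u ^ (3 * (α₁ / α₂) - 2 * α₁)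
        + (1 - u ^ (α₁ / α₂ * (3 - 2 * α₂))) / (3 - 2 * α₂) := by
  obtain ⟨hu0, hu1⟩ := hu
  have hs0 : 0 ≤ u ^ (α₁ / α₂) := rpow_nonneg hu0.le _
  have hs1 : u ^ (α₁ / α₂) ≤ 1 := rpow_le_one hu0.le hu1 (div_nonneg hα₁ hα₂.1.le)
  have hexp : -1 < 2 - 2 * α₂ := by linarith [hα₂.2]
  calc ∫ v in (0:ℝ)..1, partialDeriv α₁ α₂ u v ^ 2
      = ∫ v in (0:ℝ)..1, if v < u ^ (α₁ / α₂) then ((1 - α₁) * u ^ (-α₁)) ^ 2 * v ^ 2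
          else v ^ (2 - 2 * α₂) :=
        integral_congr_Ioo_of_le zero_le_one fun v hv => partialDeriv_sq hα₂.1 hu0 hv.1
    _ = ((1 - α₁) * u ^ (-α₁)) ^ 2 * ((u ^ (α₁ / α₂)) ^ 3 / 3)
          + (1 - (u ^ (α₁ / α₂)) ^ (3 - 2 * α₂)) / (3 - 2 * α₂) := by
        rw [integral_ite_lt hs0 hs1 (Continuous.intervalIntegrable (by fun_prop) _ _)
            (intervalIntegrable_rpow' hexp), intervalIntegral.integral_const_mul, integral_pow,
          integral_rpow (Or.inl hexp), one_rpow, show 2 - 2 * α₂ + 1 = 3 - 2 * α₂ by ring]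
        norm_num
    _ = _ := by
        have hpow : (u ^ (-α₁)) ^ 2 * (u ^ (α₁ / α₂)) ^ 3 = u ^ (3 * (α₁ / α₂) - 2 * α₁) := by
          rw [← rpow_mul_natCast hu0.le, ← rpow_mul_natCast hu0.le, ← rpow_add hu0]
          ring_nf
        rw [← rpow_mul hu0.le, ← hpow]
        ring

lemma integral_integral_partialDeriv_sq (hα₁ : α₁ ∈ Ioc 0 1) (hα₂ : α₂ ∈ Ioc 0 1) :
    ∫ v in (0:ℝ)..1, ∫ u in (0:ℝ)..1, partialDeriv α₁ α₂ u v ^ 2 =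
      ((1 - α₁) ^ 2 * α₂ / 3 + α₁) / (3 * α₁ + α₂ - 2 * α₁ * α₂) := by
  obtain ⟨hα₁0, hα₁1⟩ := hα₁
  obtain ⟨hα₂0, hα₂1⟩ := hα₂
  have hE : 0 < 3 * α₁ + α₂ - 2 * α₁ * α₂ := by nlinarith
  have hd : 0 < 3 - 2 * α₂ := by linarith
  have ha : 3 * (α₁ / α₂) - 2 * α₁ + 1 = (3 * α₁ + α₂ - 2 * α₁ * α₂) / α₂ := by
    field_simp; ring
  have hb : α₁ / α₂ * (3 - 2 * α₂) + 1 = (3 * α₁ + α₂ - 2 * α₁ * α₂) / α₂ := by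
    field_simp; ring
  have hEα₂ : 0 < (3 * α₁ + α₂ - 2 * α₁ * α₂) / α₂ := div_pos hE hα₂0
  have hia := intervalIntegrable_rpow' (a := 0) (b := 1) (r := 3 * (α₁ / α₂) - 2 * α₁)
    (by linarith)
  have hib := intervalIntegrable_rpow' (a := 0) (b := 1) (r := α₁ / α₂ * (3 - 2 * α₂))
    (by linarith)
  rw [intervalIntegral_intervalIntegral_swap (integrableOn_partialDeriv_sq ⟨hα₁0.le, hα₁1⟩ hα₂1),
    integral_congr_Ioo_of_le zero_le_one fun u hu =>
      integral_partialDeriv_sq_dv hα₁0.le ⟨hα₂0, hα₂1⟩ ⟨hu.1, hu.2.le⟩,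
    integral_add (hia.const_mul _) ((intervalIntegrable_const.sub hib).div_const _),
    intervalIntegral.integral_const_mul, intervalIntegral.integral_div,
    integral_sub intervalIntegrable_const hib, integral_one,
    integral_rpow_zero_one (by linarith), integral_rpow_zero_one (by linarith), ha, hb]
  have hE_sub : 3 * α₁ + α₂ - 2 * α₁ * α₂ - α₂ = α₁ * (3 - 2 * α₂) := by ring
  -- `field_simp` only recognises these denominators as nonzero when they are atoms.
  generalize 3 * α₁ + α₂ - 2 * α₁ * α₂ = E at *
  generalize 3 - 2 * α₂ = d at *
  field_simp
  linear_combination 3 * hE_sub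

end MarshallOlkin

theorem marshall_olkin_chatterjee_xi (α₁ α₂ : ℝ)
    (h₁ : α₁ ∈ Set.Ioc (0:ℝ) 1) (h₂ : α₂ ∈ Set.Ioc (0:ℝ) 1) :
    6 * (∫ v in (0:ℝ)..1, ∫ u in (0:ℝ)..1,
        ((if u ^ (1 - α₁) * v < u * v ^ (1 - α₂)
            then (1 - α₁) * u ^ (-α₁) * v
            else v ^ (1 - α₂)) : ℝ) ^ 2) - 2
      = 2 * α₁ ^ 2 * α₂ / (3 * α₁ + α₂ - 2 * α₁ * α₂) := by
  have hE : 3 * α₁ + α₂ - 2 * α₁ * α₂ ≠ 0 := by nlinarith [h₁.1, h₁.2, h₂.1, h₂.2]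
  change 6 * (∫ v in (0:ℝ)..1, ∫ u in (0:ℝ)..1, MarshallOlkin.partialDeriv α₁ α₂ u v ^ 2) - 2 = _
  rw [MarshallOlkin.integral_integral_partialDeriv_sq h₁ h₂, mul_div_assoc', div_sub' hE,
    div_left_inj' hE]
  ring
end

section
/- For the Ali-Mikhail-Haq copula C_θ(u,v) = uv / (1 − θ(1−u)(1−v)) with θ ∈ (0,1), Chatterjee's xi coefficient equals ξ(C_θ) = 6·∫₀¹∫₀¹ (∂₁C_θ(u,v))² du dv − 2 = −θ/6 − 2/3 + 3/θ − 2/θ² − 2(θ−1)²·ln(1−θ)/θ³. -/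
/-!
Write `c = 1 - θ (1 - v)`. The partial derivative `∂₁C_θ(u, v)` equals `v c / (c + (1 - c) u)²`,
whose square has the rational antiderivative `u (w² + w c + c²) / (3 c w³)` in `u`, where
`w = c + (1 - c) u`; hence the inner integral is `v² (1 + c + c²) / (3 c)`. Integrating this in `v`
is elementary, and the only transcendental contribution is the `log c` coming from `v² / c`.
-/

open Real Set

lemma amh_partial_one_eq (θ u v : ℝ) :
    v * (θ * u * (v - 1) - θ * (u - 1) * (v - 1) + 1) / (θ * (u - 1) * (v - 1) - 1) ^ 2
      = v * (1 - θ * (1 - v)) / (1 - θ * (1 - v) + θ * (1 - v) * u) ^ 2 := by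
  congr 1 <;> ring

lemma one_sub_mul_one_sub_pos {θ v : ℝ} (hθ : θ < 1) (hv : v ∈ uIcc (0:ℝ) 1) :
    0 < 1 - θ * (1 - v) := by
  rw [uIcc_of_le zero_le_one] at hv
  rcases le_total θ 0 with h | h <;> nlinarith [hv.1, hv.2]

lemma integral_sq_div_linear_sq {c : ℝ} (hc : 0 < c) :
    ∫ u in (0:ℝ)..1, (c / (c + (1 - c) * u) ^ 2) ^ 2 = (1 + c + c ^ 2) / (3 * c) := by
  have hw : ∀ u ∈ uIcc (0:ℝ) 1, 0 < c + (1 - c) * u := fun u hu ↦ by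
    linarith [one_sub_mul_one_sub_pos (θ := 1 - c) (by linarith) hu]
  have hderiv : ∀ u ∈ uIcc (0:ℝ) 1,
      HasDerivAt (fun u ↦ u * ((c + (1 - c) * u) ^ 2 + (c + (1 - c) * u) * c + c ^ 2)
          / (3 * c * (c + (1 - c) * u) ^ 3))
        ((c / (c + (1 - c) * u) ^ 2) ^ 2) u := by
    intro u hu
    have hwu := (hw u hu).ne'
    have hlin : HasDerivAt (fun u ↦ c + (1 - c) * u) (1 - c) u := by
      simpa using ((hasDerivAt_id u).const_mul (1 - c)).const_add c
    have hnum := (hasDerivAt_id' u).mul (((hlin.pow 2).add (hlin.mul_const c)).add_const (c ^ 2))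
    have hden := (hlin.pow 3).const_mul (3 * c)
    refine (hnum.div hden (mul_ne_zero (by positivity) (pow_ne_zero 3 hwu))).congr_deriv ?_
    norm_num
    field_simp
    ring
  have hint :
      IntervalIntegrable (fun u ↦ (c / (c + (1 - c) * u) ^ 2) ^ 2) MeasureTheory.volume 0 1 :=
    (ContinuousOn.pow (continuousOn_const.div (by fun_prop)
      fun u hu ↦ (pow_pos (hw u hu) 2).ne') 2).intervalIntegrable
  rw [intervalIntegral.integral_eq_sub_of_hasDerivAt hderiv hint]
  field_simp
  ring

lemma amh_inner_integral {θ v : ℝ} (h : 0 < 1 - θ * (1 - v)) :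
    ∫ u in (0:ℝ)..1,
        (v * (θ * u * (v - 1) - θ * (u - 1) * (v - 1) + 1) / (θ * (u - 1) * (v - 1) - 1) ^ 2) ^ 2
      = v ^ 2 * ((1 + (1 - θ * (1 - v)) + (1 - θ * (1 - v)) ^ 2) / (3 * (1 - θ * (1 - v)))) := by
  set c := 1 - θ * (1 - v) with hc
  have hlin : θ * (1 - v) = 1 - c := by rw [hc]; ring
  simp_rw [amh_partial_one_eq, ← hc, hlin, mul_div_assoc, mul_pow]
  rw [intervalIntegral.integral_const_mul, integral_sq_div_linear_sq h]

lemma amh_outer_integral {θ : ℝ} (hθ0 : θ ≠ 0) (hθ1 : θ < 1) :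
    ∫ v in (0:ℝ)..1,
        v ^ 2 * ((1 + (1 - θ * (1 - v)) + (1 - θ * (1 - v)) ^ 2) / (3 * (1 - θ * (1 - v))))
      = θ / 12 + (2 - θ) / 9 + 1 / (6 * θ) - (1 - θ) / (3 * θ ^ 2)
          - (1 - θ) ^ 2 * log (1 - θ) / (3 * θ ^ 3) := by
  have hderiv : ∀ v ∈ uIcc (0:ℝ) 1,
      HasDerivAt (fun v ↦ θ * v ^ 4 / 12 + (2 - θ) * v ^ 3 / 9 + v ^ 2 / (6 * θ)
          - (1 - θ) * v / (3 * θ ^ 2) + (1 - θ) ^ 2 * log (1 - θ * (1 - v)) / (3 * θ ^ 3))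
        (v ^ 2 * ((1 + (1 - θ * (1 - v)) + (1 - θ * (1 - v)) ^ 2) / (3 * (1 - θ * (1 - v))))) v := by
    intro v hv
    have hcv := one_sub_mul_one_sub_pos hθ1 hv
    have hlin : HasDerivAt (fun v ↦ 1 - θ * (1 - v)) θ v := by
      simpa using (((hasDerivAt_id v).const_sub 1).const_mul θ).const_sub 1
    have hpoly := ((((hasDerivAt_pow 4 v).const_mul θ).div_const 12).add
      (((hasDerivAt_pow 3 v).const_mul (2 - θ)).div_const 9)).add
      ((hasDerivAt_pow 2 v).div_const (6 * θ)) |>.sub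
      (((hasDerivAt_id' v).const_mul (1 - θ)).div_const (3 * θ ^ 2))
    refine (hpoly.add (((hlin.log hcv.ne').const_mul ((1 - θ) ^ 2)).div_const (3 * θ ^ 3)))
      |>.congr_deriv ?_
    norm_num
    field_simp
    ring
  have hint : IntervalIntegrable
      (fun v ↦ v ^ 2 * ((1 + (1 - θ * (1 - v)) + (1 - θ * (1 - v)) ^ 2) / (3 * (1 - θ * (1 - v)))))
      MeasureTheory.volume 0 1 :=
    (ContinuousOn.mul (by fun_prop) (ContinuousOn.div (by fun_prop) (by fun_prop)
      fun v hv ↦ by have := one_sub_mul_one_sub_pos hθ1 hv; positivity)).intervalIntegrable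
  rw [intervalIntegral.integral_eq_sub_of_hasDerivAt hderiv hint]
  norm_num

theorem amh_chatterjee_xi (θ : ℝ) (hθ : θ ∈ Set.Ioo (0:ℝ) 1) :
    6 * (∫ v in (0:ℝ)..1, ∫ u in (0:ℝ)..1,
        (v * (θ * u * (v - 1) - θ * (u - 1) * (v - 1) + 1) /
          (θ * (u - 1) * (v - 1) - 1) ^ 2) ^ 2) - 2
      = -θ / 6 - 2 / 3 + 3 / θ - 2 / θ ^ 2
          - 2 * (θ - 1) ^ 2 * Real.log (1 - θ) / θ ^ 3 := by
  obtain ⟨hθ0, hθ1⟩ := hθ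
  rw [intervalIntegral.integral_congr fun v hv ↦
      amh_inner_integral (one_sub_mul_one_sub_pos hθ1 hv), amh_outer_integral hθ0.ne' hθ1]
  field_simp
  ring
end

section
/- For the Ali-Mikhail-Haq inverse generator ψ_θ(y) = (θ−1)/(θ − e^y) with θ ∈ [−1,1), θ ≠ 0, the second derivative of y ↦ log(−ψ_θ′(y)) equals 2θe^y/(θ − e^y)². Consequently this function is concave on (0,∞) if and only if θ ≤ 0, and convex on (0,∞) if and only if θ ≥ 0. -/
/-!
On `(0, ∞)` we have `e^y > 1 > θ`, so `log (-ψ_θ' y) = log (1 - θ) + y - 2 log (e^y - θ)`.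
Differentiating twice gives `2θe^y / (e^y - θ)²`, whose sign is that of `θ`. For `θ ≠ 0` the
function is therefore strictly convex or strictly concave, which excludes the other property.
-/

open Real Set

section StrictConvexity

variable {𝕜 E β : Type*} [Semifield 𝕜] [LinearOrder 𝕜] [IsStrictOrderedRing 𝕜] [AddCommMonoid E]
  [SMul 𝕜 E] [AddCommMonoid β] [PartialOrder β] [SMul 𝕜 β] {s : Set E} {f : E → β}

theorem StrictConvexOn.not_concaveOn (hf : StrictConvexOn 𝕜 s f) (hs : s.Nontrivial) :
    ¬ConcaveOn 𝕜 s f := fun hc => by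
  obtain ⟨x, hx, y, hy, hxy⟩ := hs
  have h₀ : (0 : 𝕜) < 1 / 2 := one_half_pos
  exact (hf.2 hx hy hxy h₀ h₀ (add_halves 1)).not_ge (hc.2 hx hy h₀.le h₀.le (add_halves 1))

theorem StrictConcaveOn.not_convexOn (hf : StrictConcaveOn 𝕜 s f) (hs : s.Nontrivial) :
    ¬ConvexOn 𝕜 s f := fun hc => by
  obtain ⟨x, hx, y, hy, hxy⟩ := hs
  have h₀ : (0 : 𝕜) < 1 / 2 := one_half_pos
  exact (hf.2 hx hy hxy h₀ h₀ (add_halves 1)).not_ge (hc.2 hx hy h₀.le h₀.le (add_halves 1))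

end StrictConvexity

namespace AliMikhailHaq

/-- `y ↦ log (-ψ_θ' y)` for the Ali–Mikhail–Haq inverse generator `ψ_θ y = (θ - 1) / (θ - e^y)`. -/
noncomputable def logNegDeriv (θ y : ℝ) : ℝ :=
  log ((1 - θ) * exp y / (θ - exp y) ^ 2)

variable {θ y : ℝ}

theorem exp_sub_pos (hθ : θ ≤ 1) (hy : 0 < y) : 0 < exp y - θ := by
  linarith [one_lt_exp_iff.mpr hy]

theorem logNegDeriv_eq (hθ : θ < 1) (hy : 0 < y) :
    logNegDeriv θ y = log (1 - θ) + y - 2 * log (exp y - θ) := by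
  have hpos := exp_sub_pos hθ.le hy
  rw [logNegDeriv, show (θ - exp y) ^ 2 = (exp y - θ) ^ 2 by ring,
    log_div (by nlinarith [exp_pos y]) (by positivity), log_mul (by linarith) (exp_ne_zero y),
    log_exp, log_pow]
  push_cast
  ring

theorem hasDerivAt_logNegDeriv (hθ : θ < 1) (hy : 0 < y) :
    HasDerivAt (logNegDeriv θ) (1 - 2 * (exp y / (exp y - θ))) y := by
  have hsplit : HasDerivAt (fun y => log (1 - θ) + y - 2 * log (exp y - θ))
      (1 - 2 * (exp y / (exp y - θ))) y :=
    ((hasDerivAt_id y).const_add _).sub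
      ((((hasDerivAt_exp y).sub_const θ).log (exp_sub_pos hθ.le hy).ne').const_mul 2)
  refine hsplit.congr_of_eventuallyEq ?_
  filter_upwards [isOpen_Ioi.mem_nhds hy] with z hz using logNegDeriv_eq hθ hz

theorem deriv_logNegDeriv (hθ : θ < 1) :
    EqOn (deriv (logNegDeriv θ)) (fun y => 1 - 2 * (exp y / (exp y - θ))) (Ioi 0) :=
  fun _ hy => (hasDerivAt_logNegDeriv hθ hy).deriv

theorem hasDerivAt_deriv_logNegDeriv (hθ : θ < 1) (hy : 0 < y) :
    HasDerivAt (deriv (logNegDeriv θ)) (2 * θ * exp y / (θ - exp y) ^ 2) y := by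
  have hne := (exp_sub_pos hθ.le hy).ne'
  have hquot : HasDerivAt (fun y => 1 - 2 * (exp y / (exp y - θ)))
      (-(2 * ((exp y * (exp y - θ) - exp y * exp y) / (exp y - θ) ^ 2))) y :=
    (((hasDerivAt_exp y).div ((hasDerivAt_exp y).sub_const θ) hne).const_mul 2).const_sub 1
  refine (hquot.congr_of_eventuallyEq ?_).congr_deriv ?_
  · filter_upwards [isOpen_Ioi.mem_nhds hy] with z hz using deriv_logNegDeriv hθ hz
  · rw [show (θ - exp y) ^ 2 = (exp y - θ) ^ 2 by ring]
    field_simp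
    ring

theorem iteratedDeriv_two_logNegDeriv (hθ : θ < 1) (hy : 0 < y) :
    iteratedDeriv 2 (logNegDeriv θ) y = 2 * θ * exp y / (θ - exp y) ^ 2 := by
  rw [iteratedDeriv_succ, iteratedDeriv_one]
  exact (hasDerivAt_deriv_logNegDeriv hθ hy).deriv

theorem sign_deriv2_logNegDeriv (hθ : θ < 1) (hy : 0 < y) :
    SignType.sign (deriv^[2] (logNegDeriv θ) y) = SignType.sign θ := by
  have hpos := exp_sub_pos hθ.le hy
  have hfactor : 0 < 2 * exp y / (θ - exp y) ^ 2 := by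
    rw [show (θ - exp y) ^ 2 = (exp y - θ) ^ 2 by ring]
    positivity
  rw [← iteratedDeriv_eq_iterate, iteratedDeriv_two_logNegDeriv hθ hy,
    show 2 * θ * exp y / (θ - exp y) ^ 2 = θ * (2 * exp y / (θ - exp y) ^ 2) by ring,
    sign_mul, sign_pos hfactor, mul_one]

theorem differentiableOn_logNegDeriv (hθ : θ < 1) : DifferentiableOn ℝ (logNegDeriv θ) (Ioi 0) :=
  fun _ hy => (hasDerivAt_logNegDeriv hθ hy).differentiableAt.differentiableWithinAt

theorem differentiableOn_deriv_logNegDeriv (hθ : θ < 1) :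
    DifferentiableOn ℝ (deriv (logNegDeriv θ)) (Ioi 0) :=
  fun _ hy => (hasDerivAt_deriv_logNegDeriv hθ hy).differentiableAt.differentiableWithinAt

theorem concaveOn_logNegDeriv (hθ : θ ≤ 0) : ConcaveOn ℝ (Ioi 0) (logNegDeriv θ) := by
  have hθ₁ : θ < 1 := by linarith
  refine concaveOn_of_deriv2_nonpos' (convex_Ioi 0) (differentiableOn_logNegDeriv hθ₁)
    (differentiableOn_deriv_logNegDeriv hθ₁) fun y hy => ?_
  rw [← sign_nonpos_iff, sign_deriv2_logNegDeriv hθ₁ hy, sign_nonpos_iff]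
  exact hθ

theorem convexOn_logNegDeriv (hθ₀ : 0 ≤ θ) (hθ₁ : θ < 1) :
    ConvexOn ℝ (Ioi 0) (logNegDeriv θ) := by
  refine convexOn_of_deriv2_nonneg' (convex_Ioi 0) (differentiableOn_logNegDeriv hθ₁)
    (differentiableOn_deriv_logNegDeriv hθ₁) fun y hy => ?_
  rw [← sign_nonneg_iff, sign_deriv2_logNegDeriv hθ₁ hy, sign_nonneg_iff]
  exact hθ₀

theorem strictConcaveOn_logNegDeriv (hθ : θ < 0) :
    StrictConcaveOn ℝ (Ioi 0) (logNegDeriv θ) := by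
  have hθ₁ : θ < 1 := by linarith
  refine strictConcaveOn_of_deriv2_neg' (convex_Ioi 0)
    (differentiableOn_logNegDeriv hθ₁).continuousOn fun y hy => ?_
  rw [← sign_eq_neg_one_iff, sign_deriv2_logNegDeriv hθ₁ hy, sign_eq_neg_one_iff]
  exact hθ

theorem strictConvexOn_logNegDeriv (hθ₀ : 0 < θ) (hθ₁ : θ < 1) :
    StrictConvexOn ℝ (Ioi 0) (logNegDeriv θ) := by
  refine strictConvexOn_of_deriv2_pos' (convex_Ioi 0)
    (differentiableOn_logNegDeriv hθ₁).continuousOn fun y hy => ?_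
  rw [← sign_eq_one_iff, sign_deriv2_logNegDeriv hθ₁ hy, sign_eq_one_iff]
  exact hθ₀

end AliMikhailHaq

open AliMikhailHaq

theorem amh_log_second_deriv_and_convexity_general (θ : ℝ)
    (hθ : θ ∈ Set.Ico (-1:ℝ) 1) :
    (∀ y ∈ Set.Ioi (0:ℝ),
        iteratedDeriv 2
            (fun y : ℝ => Real.log ((1 - θ) * Real.exp y / (θ - Real.exp y) ^ 2)) y
          = 2 * θ * Real.exp y / (θ - Real.exp y) ^ 2) ∧
      (ConcaveOn ℝ (Set.Ioi 0)
          (fun y : ℝ => Real.log ((1 - θ) * Real.exp y / (θ - Real.exp y) ^ 2)) ↔ θ ≤ 0) ∧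
      (ConvexOn ℝ (Set.Ioi 0)
          (fun y : ℝ => Real.log ((1 - θ) * Real.exp y / (θ - Real.exp y) ^ 2)) ↔ 0 ≤ θ) := by
  obtain ⟨-, hθ₁⟩ := hθ
  have hIoi : (Ioi (0 : ℝ)).Nontrivial := ⟨1, by norm_num, 2, by norm_num, by norm_num⟩
  refine ⟨fun y hy => iteratedDeriv_two_logNegDeriv hθ₁ hy,
    ⟨fun hconc => ?_, concaveOn_logNegDeriv⟩,
    ⟨fun hconv => ?_, fun hθ₀ => convexOn_logNegDeriv hθ₀ hθ₁⟩⟩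
  · by_contra! hθ₀
    exact (strictConvexOn_logNegDeriv hθ₀ hθ₁).not_concaveOn hIoi hconc
  · by_contra! hθ₀
    exact (strictConcaveOn_logNegDeriv hθ₀).not_convexOn hIoi hconv

theorem amh_log_second_deriv_and_convexity (θ : ℝ)
    (hθ : θ ∈ Set.Ico (-1:ℝ) 1) (hθ0 : θ ≠ 0) :
    (∀ y ∈ Set.Ioi (0:ℝ),
        iteratedDeriv 2
            (fun y : ℝ => Real.log ((1 - θ) * Real.exp y / (θ - Real.exp y) ^ 2)) y
          = 2 * θ * Real.exp y / (θ - Real.exp y) ^ 2) ∧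
      (ConcaveOn ℝ (Set.Ioi 0)
          (fun y : ℝ => Real.log ((1 - θ) * Real.exp y / (θ - Real.exp y) ^ 2)) ↔ θ ≤ 0) ∧
      (ConvexOn ℝ (Set.Ioi 0)
          (fun y : ℝ => Real.log ((1 - θ) * Real.exp y / (θ - Real.exp y) ^ 2)) ↔ 0 ≤ θ) :=
  amh_log_second_deriv_and_convexity_general θ hθ
end

section
/- For the Fréchet copula C_{α,β} = α·M + (1−α−β)·Π + β·W with α, β ≥ 0, α + β ≤ 1, where M(u,v) = min(u,v), Π(u,v) = uv, W(u,v) = max(u+v−1, 0), Chatterjee's xi coefficient equals ξ(C_{α,β}) = 6·∫₀¹∫₀¹ (∂₁C_{α,β}(u,v))² du dv − 2 = (α − β)² + αβ. -/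
/-!
Write `I = 1_{u < v}` and `J = 1_{1 - v < u}`. Since `I² = I`, `J² = J` and `I J = 1_{1 - v < u < v}`,
the square of `∂₁C_{α,β}` is affine in three indicators of intervals. For `v ∈ [0, 1]` the inner
integral is therefore the sum of their lengths weighted by the coefficients, a quadratic polynomial
in `v` plus `2αβ (2v - 1)⁺`, and integrating over `v` gives `1/3`, `1/2` and `1/4` for these terms.
-/

open MeasureTheory Real Set

section IndicatorIntegral

variable {μ : Measure ℝ} {s : Set ℝ} {a b : ℝ}

theorem intervalIntegrable_indicator_one [IsLocallyFiniteMeasure μ] (hs : MeasurableSet s) :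
    IntervalIntegrable (s.indicator (1 : ℝ → ℝ)) μ a b := by
  rw [intervalIntegrable_iff]
  exact (integrableOn_const
    ((measure_mono uIoc_subset_uIcc).trans_lt isCompact_uIcc.measure_lt_top).ne).indicator hs

theorem intervalIntegral_indicator_one (hs : MeasurableSet s) (hab : a ≤ b) :
    ∫ u in a..b, s.indicator (1 : ℝ → ℝ) u ∂μ = μ.real (s ∩ Ioc a b) := by
  rw [intervalIntegral.integral_of_le hab, integral_indicator_one hs,
    measureReal_restrict_apply hs]

end IndicatorIntegral

theorem integral_max_two_mul_sub_one_zero : ∫ v in (0:ℝ)..1, max (2 * v - 1) 0 = 1 / 4 := by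
  have hcont : Continuous fun v : ℝ => max (2 * v - 1) 0 := by fun_prop
  have hlow : ∫ v in (0:ℝ)..1/2, max (2 * v - 1) 0 = 0 := by
    rw [intervalIntegral.integral_congr (g := fun _ => 0) fun v hv => by
      simp only [uIcc_of_le (by norm_num : (0:ℝ) ≤ 1/2), mem_Icc] at hv
      exact max_eq_right (by linarith)]
    exact intervalIntegral.integral_zero
  have hhigh : ∫ v in (1/2:ℝ)..1, max (2 * v - 1) 0 = 1 / 4 := by
    rw [intervalIntegral.integral_congr (g := fun v => 2 * v - 1) fun v hv => by
        simp only [uIcc_of_le (by norm_num : (1/2:ℝ) ≤ 1), mem_Icc] at hv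
        exact max_eq_left (by linarith),
      intervalIntegral.integral_sub (Continuous.intervalIntegrable (by fun_prop) _ _)
        intervalIntegrable_const, intervalIntegral.integral_const_mul]
    norm_num
  rw [← intervalIntegral.integral_add_adjacent_intervals (hcont.intervalIntegrable _ _)
    (hcont.intervalIntegrable _ _), hlow, hhigh, zero_add]

/-- The a.e. partial derivative `∂₁C_{α,β}(u, v)` of the Fréchet copula. -/
noncomputable def frechetPartialFst (α β u v : ℝ) : ℝ :=
  α * (if u < v then 1 else 0) + (1 - α - β) * v + β * (if 1 - v < u then 1 else 0)

theorem sq_frechetPartialFst (α β u v : ℝ) :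
    frechetPartialFst α β u v ^ 2 = (1 - α - β) ^ 2 * v ^ 2
      + (α ^ 2 + 2 * α * (1 - α - β) * v) * (Iio v).indicator 1 u
      + (β ^ 2 + 2 * β * (1 - α - β) * v) * (Ioi (1 - v)).indicator 1 u
      + 2 * α * β * (Ioo (1 - v) v).indicator 1 u := by
  unfold frechetPartialFst
  by_cases hv : u < v <;> by_cases hw : 1 - v < u <;> simp [hv, hw] <;> ring

theorem integral_sq_frechetPartialFst (α β : ℝ) {v : ℝ} (hv : v ∈ Icc 0 1) :
    ∫ u in (0:ℝ)..1, frechetPartialFst α β u v ^ 2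
      = ((1 - α - β) ^ 2 + 2 * (α + β) * (1 - α - β)) * v ^ 2 + (α ^ 2 + β ^ 2) * v
        + 2 * α * β * max (2 * v - 1) 0 := by
  obtain ⟨hv₀, hv₁⟩ := hv
  have hIio : volume.real (Iio v ∩ Ioc 0 1) = v := by
    rw [show Iio v ∩ Ioc 0 1 = Ioo 0 v by
        ext u; simp only [mem_inter_iff, mem_Iio, mem_Ioc, mem_Ioo]; grind,
      volume_real_Ioo_of_le hv₀, sub_zero]
  have hIoi : volume.real (Ioi (1 - v) ∩ Ioc 0 1) = v := by
    rw [show Ioi (1 - v) ∩ Ioc 0 1 = Ioc (1 - v) 1 by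
        ext u; simp only [mem_inter_iff, mem_Ioi, mem_Ioc]; grind,
      volume_real_Ioc_of_le (by linarith), sub_sub_cancel]
  have hIoo : volume.real (Ioo (1 - v) v ∩ Ioc 0 1) = max (2 * v - 1) 0 := by
    rw [Ioo_inter_Ioc_of_left_le hv₁, max_eq_left (by linarith), volume_real_Ioo]
    ring_nf
  have hint {s : Set ℝ} (hs : MeasurableSet s) (c : ℝ) :
      IntervalIntegrable (fun u => c * s.indicator 1 u) volume 0 1 :=
    (intervalIntegrable_indicator_one hs).const_mul c
  simp_rw [sq_frechetPartialFst]
  rw [intervalIntegral.integral_add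
      ((intervalIntegrable_const.add (hint measurableSet_Iio _)).add (hint measurableSet_Ioi _))
      (hint measurableSet_Ioo _),
    intervalIntegral.integral_add (intervalIntegrable_const.add (hint measurableSet_Iio _))
      (hint measurableSet_Ioi _),
    intervalIntegral.integral_add intervalIntegrable_const (hint measurableSet_Iio _)]
  simp only [intervalIntegral.integral_const_mul, intervalIntegral.integral_const,
    intervalIntegral_indicator_one measurableSet_Iio zero_le_one,
    intervalIntegral_indicator_one measurableSet_Ioi zero_le_one,
    intervalIntegral_indicator_one measurableSet_Ioo zero_le_one, hIio, hIoi, hIoo]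
  ring

theorem frechet_chatterjee_xi_general (α β : ℝ) :
    6 * (∫ v in (0:ℝ)..1, ∫ u in (0:ℝ)..1,
        ((α * (if u < v then (1:ℝ) else 0) + (1 - α - β) * v
            + β * (if 1 - v < u then (1:ℝ) else 0)) : ℝ) ^ 2) - 2
      = (α - β) ^ 2 + α * β := by
  change 6 * (∫ v in (0:ℝ)..1, ∫ u in (0:ℝ)..1, frechetPartialFst α β u v ^ 2) - 2 = _
  rw [intervalIntegral.integral_congr fun v hv =>
      integral_sq_frechetPartialFst α β (by rwa [uIcc_of_le zero_le_one] at hv),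
    intervalIntegral.integral_add (Continuous.intervalIntegrable (by fun_prop) _ _)
      (Continuous.intervalIntegrable (by fun_prop) _ _),
    intervalIntegral.integral_add (Continuous.intervalIntegrable (by fun_prop) _ _)
      (Continuous.intervalIntegrable (by fun_prop) _ _),
    intervalIntegral.integral_const_mul, intervalIntegral.integral_const_mul,
    intervalIntegral.integral_const_mul, integral_pow, integral_id,
    integral_max_two_mul_sub_one_zero]
  norm_num
  ring

theorem frechet_chatterjee_xi (α β : ℝ) (hα : 0 ≤ α) (hβ : 0 ≤ β)
    (hαβ : α + β ≤ 1) :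
    6 * (∫ v in (0:ℝ)..1, ∫ u in (0:ℝ)..1,
        ((α * (if u < v then (1:ℝ) else 0) + (1 - α - β) * v
            + β * (if 1 - v < u then (1:ℝ) else 0)) : ℝ) ^ 2) - 2
      = (α - β) ^ 2 + α * β :=
  frechet_chatterjee_xi_general α β
end
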